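/- For the bicomplex k-Fibonacci quaternion Q_{k,n} and its i-conjugate Q_{k,n}^{*₁} = F_{k,n} − i·F_{k,n+1} + j·F_{k,n+2} − ij·F_{k,n+3}, one has Q_{k,n}·Q_{k,n}^{*₁} = F_{k,2n+1} − F_{k,2n+5} + 2j·F_{k,2n+3}. -/

import Mathlib

open TensorProduct

noncomputable def kFib (k : ℝ) : ℕ → ℝ
  | 0 => 0
  | 1 => 1
  | n + 2 => k * kFib k (n + 1) + kFib k n

abbrev Bicomplex : Type := ℂ ⊗[ℝ] ℂ

noncomputable def bi : Bicomplex := (Complex.I : ℂ) ⊗ₜ[ℝ] (1 : ℂ)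
noncomputable def bj : Bicomplex := (1 : ℂ) ⊗ₜ[ℝ] (Complex.I : ℂ)

noncomputable def Q (k : ℝ) (n : ℕ) : Bicomplex :=
  algebraMap ℝ Bicomplex (kFib k n) + kFib k (n + 1) • bi
    + kFib k (n + 2) • bj + kFib k (n + 3) • (bi * bj)

/-! The product of a bicomplex number with its `i`-conjugate only involves `1` and `j`, with
coefficients that are sums of products `F_m F_n`; these are recognised as single terms by the
addition formula `F_{m+n+1} = F_m F_n + F_{m+1} F_{n+1}`. -/

section kFib

variable (k : ℝ)

@[simp] lemma kFib_zero : kFib k 0 = 0 := rfl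

@[simp] lemma kFib_one : kFib k 1 = 1 := rfl

lemma kFib_add_two (n : ℕ) : kFib k (n + 2) = k * kFib k (n + 1) + kFib k n := rfl

lemma kFib_add (m n : ℕ) :
    kFib k (m + n + 1) = kFib k m * kFib k n + kFib k (m + 1) * kFib k (n + 1) := by
  induction n generalizing m with
  | zero => simp
  | succ n ih =>
    rw [show m + (n + 1) + 1 = m + 1 + n + 1 by omega, ih, kFib_add_two k m, kFib_add_two k n]
    ring

lemma kFib_two_mul_add_one (n : ℕ) :
    kFib k (2 * n + 1) = kFib k n ^ 2 + kFib k (n + 1) ^ 2 := by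
  rw [two_mul, kFib_add]
  ring

lemma kFib_two_mul_add_three (n : ℕ) :
    kFib k (2 * n + 3) = kFib k n * kFib k (n + 2) + kFib k (n + 1) * kFib k (n + 3) := by
  rw [show 2 * n + 3 = n + (n + 2) + 1 by omega, kFib_add]

lemma kFib_two_mul_add_five (n : ℕ) :
    kFib k (2 * n + 5) = kFib k (n + 2) ^ 2 + kFib k (n + 3) ^ 2 := by
  rw [show 2 * n + 5 = 2 * (n + 2) + 1 by omega, kFib_two_mul_add_one]

end kFib

lemma mul_conj_of_sq_eq_neg_one {R A : Type*} [CommRing R] [CommRing A] [Algebra R A]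
    {i j : A} (hi : i * i = -1) (hj : j * j = -1) (a b c d : R) :
    (algebraMap R A a + b • i + c • j + d • (i * j)) *
        (algebraMap R A a - b • i + c • j - d • (i * j)) =
      algebraMap R A (a ^ 2 + b ^ 2 - c ^ 2 - d ^ 2) + (2 * (a * c + b * d)) • j := by
  simp only [Algebra.smul_def, map_add, map_sub, map_mul, map_pow, map_ofNat]
  linear_combination (-(algebraMap R A b) ^ 2 - (algebraMap R A d) ^ 2 * (j * j)
      - 2 * algebraMap R A b * algebraMap R A d * j) * hi
    + (algebraMap R A c ^ 2 + algebraMap R A d ^ 2) * hj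

lemma bi_mul_bi : bi * bi = -1 := by
  rw [bi, Algebra.TensorProduct.tmul_mul_tmul, Complex.I_mul_I, mul_one, neg_tmul]
  rfl

lemma bj_mul_bj : bj * bj = -1 := by
  rw [bj, Algebra.TensorProduct.tmul_mul_tmul, Complex.I_mul_I, mul_one, tmul_neg]
  rfl

theorem stmt12_general (k : ℝ) (n : ℕ) :
    Q k n * (algebraMap ℝ Bicomplex (kFib k n) - kFib k (n + 1) • bi
        + kFib k (n + 2) • bj - kFib k (n + 3) • (bi * bj)) =
      algebraMap ℝ Bicomplex (kFib k (2 * n + 1) - kFib k (2 * n + 5))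
        + (2 * kFib k (2 * n + 3)) • bj := by
  rw [Q, mul_conj_of_sq_eq_neg_one bi_mul_bi bj_mul_bj, kFib_two_mul_add_one,
    kFib_two_mul_add_three, kFib_two_mul_add_five]
  congr 2
  ring

theorem stmt12 (k : ℝ) (hk : 0 < k) (n : ℕ) :
    Q k n * (algebraMap ℝ Bicomplex (kFib k n) - kFib k (n + 1) • bi
        + kFib k (n + 2) • bj - kFib k (n + 3) • (bi * bj)) =
      algebraMap ℝ Bicomplex (kFib k (2 * n + 1) - kFib k (2 * n + 5))
        + (2 * kFib k (2 * n + 3)) • bj :=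
  stmt12_general k n
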